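/- arXiv:1911.04980 — 2 statements merged into one kernel-verified Lean document; each statement's English description precedes it below -/
import Mathlib

section
/- Let (A, ρ, [.,.]) be a Lie algebroid and Π a bivector field on A. The Jacobiator J_Π(α,β,γ) = ∮ [[α,β]_Π, γ]_Π of the Koszul bracket satisfies J_Π(α,β,γ) = ∮ L^ρ_{♯_Π([α,β]_Π) − [♯_Π(α),♯_Π(β)]} γ − ∮ d_ρ( Π(L^ρ_{♯_Π(α)}β, γ) + Π(β, L^ρ_{♯_Π(α)}γ) ), where ∮ denotes the cyclic sum over α, β, γ. -/
/-- Algebraic model of a skew algebroid over a base manifold: `R` plays the role of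
the ring of smooth functions, `G` the module of sections of the anchored bundle,
`bracket` the skew-symmetric bracket satisfying the Leibniz rule, and `anchor`
gives the action of sections on functions by derivations. -/
structure SkewAlgebroid (R : Type*) [CommRing R] (G : Type*)
    [AddCommGroup G] [Module R G] where
  bracket : G → G → G
  anchor : G → R → R
  bracket_add_left : ∀ a b c, bracket (a + b) c = bracket a c + bracket b c
  bracket_skew : ∀ a b, bracket a b = - bracket b a
  anchor_add : ∀ a b φ, anchor (a + b) φ = anchor a φ + anchor b φ
  anchor_smul : ∀ (φ : R) a ψ, anchor (φ • a) ψ = φ * anchor a ψ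
  anchor_map_add : ∀ a φ ψ, anchor a (φ + ψ) = anchor a φ + anchor a ψ
  anchor_map_mul : ∀ a φ ψ, anchor a (φ * ψ) = φ * anchor a ψ + ψ * anchor a φ
  leibniz : ∀ a (φ : R) b, bracket a (φ • b) = φ • bracket a b + anchor a φ • b

namespace SkewAlgebroid

variable {R : Type*} [CommRing R] {G : Type*} [AddCommGroup G] [Module R G]

/-- The bivector field associated to a sharp map `♯ : A* → A`: `Π(α,β) = β(♯α)`. -/
def biv (sharp : (G →ₗ[R] R) → G) (α β : G →ₗ[R] R) : R := β (sharp α)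

/-- `♯_{Π,ξ}(α) = ♯_Π(α) + α(ξ)ξ`. -/
def sharpJ (sharp : (G →ₗ[R] R) → G) (ξ : G) (α : G →ₗ[R] R) : G := sharp α + α ξ • ξ

/-- `(ξ ∧ Π)(α,β,γ)`. -/
def wedgeVB (ξ : G) (sharp : (G →ₗ[R] R) → G) (α β γ : G →ₗ[R] R) : R :=
  α ξ * biv sharp β γ - β ξ * biv sharp α γ + γ ξ * biv sharp α β

variable (S : SkewAlgebroid R G)

lemma bracket_add_right (a b c : G) :
    S.bracket a (b + c) = S.bracket a b + S.bracket a c := by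
  rw [S.bracket_skew a (b + c), S.bracket_add_left, S.bracket_skew b a, S.bracket_skew c a]
  abel

/-- The Lie `A`-derivative of a 1-form along a section. -/
def lieDeriv (a : G) (α : G →ₗ[R] R) : G →ₗ[R] R where
  toFun b := S.anchor a (α b) - α (S.bracket a b)
  map_add' b c := by
    rw [map_add, S.anchor_map_add, S.bracket_add_right, map_add]; ring
  map_smul' φ b := by
    rw [map_smul, smul_eq_mul, S.anchor_map_mul, S.leibniz, map_add, map_smul, map_smul,
      smul_eq_mul, smul_eq_mul, RingHom.id_apply, smul_eq_mul]
    ring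

/-- The exterior `A`-differential of a function, as a 1-form. -/
def dform (φ : R) : G →ₗ[R] R where
  toFun a := S.anchor a φ
  map_add' a b := S.anchor_add a b φ
  map_smul' c a := by rw [S.anchor_smul]; rfl

/-- The exterior `A`-differential of a 1-form. -/
def dOne (η : G →ₗ[R] R) (a b : G) : R :=
  S.anchor a (η b) - S.anchor b (η a) - η (S.bracket a b)

/-- The exterior `A`-differential of a 2-form. -/
def dTwo (Ω : G →ₗ[R] G →ₗ[R] R) (a b c : G) : R :=
  S.anchor a (Ω b c) - S.anchor b (Ω a c) + S.anchor c (Ω a b)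
    - Ω (S.bracket a b) c + Ω (S.bracket a c) b - Ω (S.bracket b c) a

/-- The Lie `A`-derivative of a 2-form along a section. -/
def lieTwo (ξ : G) (Ω : G →ₗ[R] G →ₗ[R] R) (a b : G) : R :=
  S.anchor ξ (Ω a b) - Ω (S.bracket ξ a) b - Ω a (S.bracket ξ b)

/-- The Koszul bracket of 1-forms associated with the bivector field given by `sharp`:
`[α,β]_Π = L_{♯α}β − L_{♯β}α − d_ρ(Π(α,β))`. -/
def koszul (sharp : (G →ₗ[R] R) → G) (α β : G →ₗ[R] R) : G →ₗ[R] R :=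
  S.lieDeriv (sharp α) β - S.lieDeriv (sharp β) α - S.dform (biv sharp α β)

/-- The Schouten–Nijenhuis bracket `[Π,Π]`, defined (as in the contravariant calculus)
by `[Π,Π] = −d_{ρ_Π}Π` via the structure `(ρ_Π, [.,.]_Π)` on the dual. -/
def schouten (sharp : (G →ₗ[R] R) → G) (α β γ : G →ₗ[R] R) : R :=
  -(S.anchor (sharp α) (biv sharp β γ) - S.anchor (sharp β) (biv sharp α γ)
      + S.anchor (sharp γ) (biv sharp α β)
      - biv sharp (S.koszul sharp α β) γ + biv sharp (S.koszul sharp α γ) β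
      - biv sharp (S.koszul sharp β γ) α)

/-- The Lie `A`-derivative `L^ρ_ξ Π` of the bivector field. -/
def lieBiv (ξ : G) (sharp : (G →ₗ[R] R) → G) (α β : G →ₗ[R] R) : R :=
  S.anchor ξ (biv sharp α β) - biv sharp (S.lieDeriv ξ α) β - biv sharp α (S.lieDeriv ξ β)

/-- The deformed dual bracket `[α,β]^λ_{Π,ξ}`. -/
def bracketJ (sharp : (G →ₗ[R] R) → G) (ξ : G) (lam : G →ₗ[R] R) (α β : G →ₗ[R] R) :
    G →ₗ[R] R :=
  S.koszul sharp α β + α ξ • (S.lieDeriv ξ β - β) - β ξ • (S.lieDeriv ξ α - α)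
    - biv sharp α β • lam

/-- The anchor is a bracket morphism (almost Lie algebroid condition). -/
def IsAlmostLie : Prop := ∀ a b φ,
  S.anchor (S.bracket a b) φ = S.anchor a (S.anchor b φ) - S.anchor b (S.anchor a φ)

/-- The Jacobi identity for the bracket (Lie algebroid condition). -/
def IsJacobi : Prop := ∀ a b c,
  S.bracket (S.bracket a b) c + S.bracket (S.bracket b c) a + S.bracket (S.bracket c a) b = 0

end SkewAlgebroid

open SkewAlgebroid

variable {R : Type*} [CommRing R] {G : Type*} [AddCommGroup G] [Module R G]

/-!
On a Lie algebroid the Lie derivative commutes with `d_ρ` (`L_a d_ρφ = d_ρ(ρ(a)φ)`) and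
satisfies `L_{[a,b]} = [L_a, L_b]`. Expanding
`[[α,β]_Π,γ]_Π = L_{♯[α,β]_Π}γ − L_{♯γ}[α,β]_Π − d_ρΠ([α,β]_Π,γ)`, the cyclic sum of the
double Lie derivatives in `L_{♯γ}[α,β]_Π` collapses to `∮ L_{[♯α,♯β]}γ`, while skew-symmetry
of `Π` gives `Π([α,β]_Π,γ) = Π(L_{♯α}β,γ) + Π(γ,L_{♯β}α) + ρ(♯γ)Π(α,β)`; the last term
cancels the `d_ρ` term of `L_{♯γ}[α,β]_Π`, and the cyclic sum regroups the remaining ones.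
-/

namespace SkewAlgebroid

variable (S : SkewAlgebroid R G)

lemma anchor_sub (a b : G) (φ : R) : S.anchor (a - b) φ = S.anchor a φ - S.anchor b φ :=
  eq_sub_of_add_eq (by rw [← S.anchor_add, sub_add_cancel])

lemma anchor_map_sub (a : G) (φ ψ : R) :
    S.anchor a (φ - ψ) = S.anchor a φ - S.anchor a ψ :=
  eq_sub_of_add_eq (by rw [← S.anchor_map_add, sub_add_cancel])

lemma bracket_sub_left (a b c : G) :
    S.bracket (a - b) c = S.bracket a c - S.bracket b c :=
  eq_sub_of_add_eq (by rw [← S.bracket_add_left, sub_add_cancel])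

lemma bracket_zero_left (a : G) : S.bracket 0 a = 0 := by
  simpa using S.bracket_sub_left 0 0 a

lemma bracket_neg_right (a b : G) : S.bracket a (-b) = -S.bracket a b := by
  rw [neg_eq_zero_sub b, S.bracket_skew a (0 - b), S.bracket_sub_left, S.bracket_zero_left,
    zero_sub, neg_neg, S.bracket_skew b a]

lemma bracket_bracket_left (hJac : S.IsJacobi) (a b c : G) :
    S.bracket (S.bracket a b) c = S.bracket a (S.bracket b c) - S.bracket b (S.bracket a c) := by
  have h := hJac a b c
  rw [S.bracket_skew (S.bracket b c), S.bracket_skew (S.bracket c a), S.bracket_skew c a,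
    S.bracket_neg_right, neg_neg] at h
  rw [← sub_eq_zero, ← h]
  abel

lemma dform_add (φ ψ : R) : S.dform (φ + ψ) = S.dform φ + S.dform ψ :=
  LinearMap.ext fun a => S.anchor_map_add a φ ψ

lemma lieDeriv_sub (a : G) (α β : G →ₗ[R] R) :
    S.lieDeriv a (α - β) = S.lieDeriv a α - S.lieDeriv a β := by
  ext x
  simp only [lieDeriv, LinearMap.coe_mk, AddHom.coe_mk, LinearMap.sub_apply, S.anchor_map_sub]
  ring

lemma lieDeriv_sub_left (a b : G) (α : G →ₗ[R] R) :
    S.lieDeriv (a - b) α = S.lieDeriv a α - S.lieDeriv b α := by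
  ext x
  simp only [lieDeriv, LinearMap.coe_mk, AddHom.coe_mk, LinearMap.sub_apply, S.anchor_sub,
    S.bracket_sub_left, map_sub]
  ring

lemma lieDeriv_dform (hAL : S.IsAlmostLie) (a : G) (φ : R) :
    S.lieDeriv a (S.dform φ) = S.dform (S.anchor a φ) := by
  ext b
  simp only [lieDeriv, dform, LinearMap.coe_mk, AddHom.coe_mk]
  rw [hAL]
  ring

lemma lieDeriv_bracket (hJac : S.IsJacobi) (hAL : S.IsAlmostLie) (a b : G) (α : G →ₗ[R] R) :
    S.lieDeriv (S.bracket a b) α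
      = S.lieDeriv a (S.lieDeriv b α) - S.lieDeriv b (S.lieDeriv a α) := by
  ext x
  simp only [lieDeriv, LinearMap.coe_mk, AddHom.coe_mk, LinearMap.sub_apply,
    S.bracket_bracket_left hJac, map_sub, S.anchor_map_sub]
  rw [hAL]
  ring

lemma lieDeriv_koszul (hAL : S.IsAlmostLie) (sharp : (G →ₗ[R] R) → G) (c : G)
    (α β : G →ₗ[R] R) :
    S.lieDeriv c (S.koszul sharp α β) = S.lieDeriv c (S.lieDeriv (sharp α) β)
      - S.lieDeriv c (S.lieDeriv (sharp β) α) - S.dform (S.anchor c (biv sharp α β)) := by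
  rw [koszul, S.lieDeriv_sub, S.lieDeriv_sub, S.lieDeriv_dform hAL]

lemma biv_koszul_left (sharp : (G →ₗ[R] R) → G)
    (hskew : ∀ α β : G →ₗ[R] R, α (sharp β) = -β (sharp α)) (α β γ : G →ₗ[R] R) :
    biv sharp (S.koszul sharp α β) γ = biv sharp (S.lieDeriv (sharp α) β) γ
      + biv sharp γ (S.lieDeriv (sharp β) α) + S.anchor (sharp γ) (biv sharp α β) := by
  simp only [biv, hskew γ, koszul, dform, LinearMap.sub_apply, LinearMap.coe_mk,
    AddHom.coe_mk]
  ring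

lemma koszul_koszul_left (hAL : S.IsAlmostLie) (sharp : (G →ₗ[R] R) → G)
    (hskew : ∀ α β : G →ₗ[R] R, α (sharp β) = -β (sharp α)) (α β γ : G →ₗ[R] R) :
    S.koszul sharp (S.koszul sharp α β) γ = S.lieDeriv (sharp (S.koszul sharp α β)) γ
      - (S.lieDeriv (sharp γ) (S.lieDeriv (sharp α) β)
        - S.lieDeriv (sharp γ) (S.lieDeriv (sharp β) α))
      - S.dform (biv sharp (S.lieDeriv (sharp α) β) γ)
      - S.dform (biv sharp γ (S.lieDeriv (sharp β) α)) := by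
  rw [koszul, S.lieDeriv_koszul hAL, S.biv_koszul_left sharp hskew, S.dform_add, S.dform_add]
  abel

end SkewAlgebroid

/-- the Jacobiator of the Koszul bracket on a Lie algebroid:
`J_Π(α,β,γ) = ∮ L_{♯_Π[α,β]_Π − [♯_Πα,♯_Πβ]} γ − ∮ d_ρ(Π(L_{♯_Πα}β,γ) + Π(β,L_{♯_Πα}γ))`. -/
theorem koszul_jacobiator
    (S : SkewAlgebroid R G) (hJac : S.IsJacobi) (hAL : S.IsAlmostLie)
    (sharp : (G →ₗ[R] R) → G)
    (hskew : ∀ α β : G →ₗ[R] R, α (sharp β) = - β (sharp α))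
    (α β γ : G →ₗ[R] R) :
    S.koszul sharp (S.koszul sharp α β) γ + S.koszul sharp (S.koszul sharp β γ) α
        + S.koszul sharp (S.koszul sharp γ α) β
      = (S.lieDeriv (sharp (S.koszul sharp α β) - S.bracket (sharp α) (sharp β)) γ
          + S.lieDeriv (sharp (S.koszul sharp β γ) - S.bracket (sharp β) (sharp γ)) α
          + S.lieDeriv (sharp (S.koszul sharp γ α) - S.bracket (sharp γ) (sharp α)) β)
        - (S.dform (biv sharp (S.lieDeriv (sharp α) β) γ + biv sharp β (S.lieDeriv (sharp α) γ))
          + S.dform (biv sharp (S.lieDeriv (sharp β) γ) α + biv sharp γ (S.lieDeriv (sharp β) α))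
          + S.dform (biv sharp (S.lieDeriv (sharp γ) α) β
              + biv sharp α (S.lieDeriv (sharp γ) β))) := by
  simp only [S.koszul_koszul_left hAL sharp hskew, S.lieDeriv_sub_left,
    S.lieDeriv_bracket hJac hAL, S.dform_add]
  abel
end

section
/- Let (Ω, η) be an almost cosymplectic structure on a skew algebroid (A, ρ, [.,.]) with Reeb section ξ and fundamental bivector Π. For a, b, c ∈ Γ(A) set α = ♭_{Ω,η}(a), β = ♭_{Ω,η}(b), γ = ♭_{Ω,η}(c). Then: (1) ((1/2)[Π,Π] − ξ∧Π)(α,β,γ) = (d_ρΩ + η∧(d_ρη − Ω − L^ρ_ξΩ))(a,b,c); (2) L^ρ_ξΠ(α,β) = (η∧L^ρ_ξη − L^ρ_ξΩ)(a,b). -/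
/-!
Write `x̄ = x - η(x) ξ` for the projection onto `ker η`. Pairing with every `♭u` (note
`♭u(ā) = Ω(a,u)`) shows `♯_Π(♭a) = ā`, whence `Π(♭a,♭b) = Ω(a,b)` and `Π(α,♭b) = -α(b̄)`.
Substituting into the Koszul formula for `[Π,Π]` gives
`½[Π,Π](♭a,♭b,♭c) = (d_ρΩ + η ∧ d_ρη)(ā,b̄,c̄)`, with `η(·)` in the wedge evaluated at `a,b,c`.
Both forms are tensorial, so expanding the bars leaves only terms with a single `ξ`; since
`i_ξΩ = 0`, Cartan's formula turns `i_ξ d_ρΩ` into `L_ξΩ`, and the `d_ρη(ξ,·)` terms cancel in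
pairs. Identity (2) is the same substitution in `L_ξΠ`. As `2` is invertible in an `ℝ`-algebra,
the skew bracket is alternating, so `[ξ,ξ] = 0`.
-/

open SkewAlgebroid

variable {R : Type*} [CommRing R] {G : Type*} [AddCommGroup G] [Module R G]

namespace SkewAlgebroid

variable (S : SkewAlgebroid R G)

@[simp] lemma anchor_map_zero (a : G) : S.anchor a 0 = 0 := by
  simpa using S.anchor_map_add a 0 0

@[simp] lemma anchor_map_one (a : G) : S.anchor a 1 = 0 := by
  simpa using S.anchor_map_mul a 1 1

lemma anchor_map_neg (a : G) (φ : R) : S.anchor a (-φ) = -S.anchor a φ :=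
  eq_neg_of_add_eq_zero_left (by rw [← S.anchor_map_add, neg_add_cancel, anchor_map_zero])

lemma bracket_smul_left (φ : R) (a b : G) :
    S.bracket (φ • a) b = φ • S.bracket a b - S.anchor b φ • a := by
  rw [S.bracket_skew, S.leibniz, S.bracket_skew b a]
  module

lemma bracket_neg_left (a b : G) : S.bracket (-a) b = -S.bracket a b := by
  rw [← neg_one_smul R a, S.bracket_smul_left, S.anchor_map_neg, S.anchor_map_one]
  module

lemma bracket_sub_right (a b c : G) : S.bracket a (b - c) = S.bracket a b - S.bracket a c := by
  rw [S.bracket_skew, S.bracket_sub_left, S.bracket_skew b, S.bracket_skew c]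
  abel

lemma bracket_self [Algebra ℝ R] (a : G) : S.bracket a a = 0 := by
  have h2 : IsUnit (2 : R) := by
    simpa only [map_ofNat] using (isUnit_of_invertible (2 : ℝ)).map (algebraMap ℝ R)
  refine h2.smul_eq_zero.mp ?_
  rw [two_smul]
  nth_rw 2 [S.bracket_skew]
  exact add_neg_cancel _

lemma lieDeriv_apply (a : G) (α : G →ₗ[R] R) (b : G) :
    S.lieDeriv a α b = S.anchor a (α b) - α (S.bracket a b) := rfl

lemma dform_apply (φ : R) (a : G) : S.dform φ a = S.anchor a φ := rfl

section Forms

variable {S} {ξ : G}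

lemma dOne_swap (η : G →ₗ[R] R) (a b : G) : S.dOne η a b = -S.dOne η b a := by
  rw [dOne, dOne, S.bracket_skew b a, map_neg]
  ring

lemma dOne_sub_smul_left (η : G →ₗ[R] R) (a x c : G) (φ : R) :
    S.dOne η (a - φ • x) c = S.dOne η a c - φ * S.dOne η x c := by
  simp only [dOne, map_sub, map_smul, smul_eq_mul, S.anchor_sub, S.anchor_smul, S.anchor_map_sub,
    S.anchor_map_mul, S.bracket_sub_left, S.bracket_smul_left]
  ring

lemma dOne_sub_smul_right (η : G →ₗ[R] R) (a c x : G) (φ : R) :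
    S.dOne η a (c - φ • x) = S.dOne η a c - φ * S.dOne η a x := by
  rw [dOne_swap, dOne_sub_smul_left, dOne_swap η c, dOne_swap η x]
  ring

lemma dOne_sub_smul_sub_smul (hξξ : S.bracket ξ ξ = 0) (η : G →ₗ[R] R) (b c : G) (φ ψ : R) :
    S.dOne η (b - φ • ξ) (c - ψ • ξ)
      = S.dOne η b c - φ * S.dOne η ξ c + ψ * S.dOne η ξ b := by
  have hself : S.dOne η ξ ξ = 0 := by simp [dOne, hξξ]
  rw [dOne_sub_smul_left, dOne_sub_smul_right, dOne_sub_smul_right, hself, dOne_swap η b ξ]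
  ring

variable (Ω : G →ₗ[R] G →ₗ[R] R)

lemma dTwo_sub_smul_left (a x b c : G) (φ : R) :
    S.dTwo Ω (a - φ • x) b c = S.dTwo Ω a b c - φ * S.dTwo Ω x b c := by
  simp only [dTwo, map_sub, map_smul, LinearMap.sub_apply, LinearMap.smul_apply, smul_eq_mul,
    S.anchor_sub, S.anchor_smul, S.anchor_map_sub, S.anchor_map_mul, S.bracket_sub_left,
    S.bracket_smul_left]
  ring

variable {Ω}

lemma dTwo_sub_smul_mid (hskew : ∀ a b, Ω a b = -Ω b a) (a b x c : G) (φ : R) :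
    S.dTwo Ω a (b - φ • x) c = S.dTwo Ω a b c - φ * S.dTwo Ω a x c := by
  simp only [dTwo, map_add, map_sub, map_smul, LinearMap.add_apply, LinearMap.sub_apply,
    LinearMap.smul_apply, smul_eq_mul, S.anchor_sub, S.anchor_smul, S.anchor_map_sub,
    S.anchor_map_mul, S.bracket_sub_left, S.bracket_smul_left, S.bracket_sub_right, S.leibniz]
  linear_combination -S.anchor c φ * hskew a x

lemma dTwo_sub_smul_right (hskew : ∀ a b, Ω a b = -Ω b a) (a b c x : G) (φ : R) :
    S.dTwo Ω a b (c - φ • x) = S.dTwo Ω a b c - φ * S.dTwo Ω a b x := by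
  simp only [dTwo, map_add, map_sub, map_smul, LinearMap.add_apply, LinearMap.sub_apply,
    LinearMap.smul_apply, smul_eq_mul, S.anchor_sub, S.anchor_smul, S.anchor_map_sub,
    S.anchor_map_mul, S.bracket_sub_right, S.leibniz]
  linear_combination S.anchor b φ * hskew a x - S.anchor a φ * hskew b x

lemma dTwo_reeb_left (hskew : ∀ a b, Ω a b = -Ω b a) (hξΩ : ∀ a, Ω ξ a = 0) (b c : G) :
    S.dTwo Ω ξ b c = S.lieTwo ξ Ω b c := by
  simp only [dTwo, lieTwo, hξΩ, S.anchor_map_zero, hskew _ ξ, neg_zero]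
  linear_combination hskew (S.bracket ξ c) b

lemma dTwo_reeb_mid (hskew : ∀ a b, Ω a b = -Ω b a) (hξΩ : ∀ a, Ω ξ a = 0) (a c : G) :
    S.dTwo Ω a ξ c = -S.lieTwo ξ Ω a c := by
  simp only [dTwo, lieTwo, hξΩ, S.anchor_map_zero, hskew _ ξ, neg_zero, S.bracket_skew a ξ,
    map_neg, LinearMap.neg_apply]
  linear_combination -hskew (S.bracket ξ c) a

lemma dTwo_reeb_right (hskew : ∀ a b, Ω a b = -Ω b a) (hξΩ : ∀ a, Ω ξ a = 0) (a b : G) :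
    S.dTwo Ω a b ξ = S.lieTwo ξ Ω a b := by
  simp only [dTwo, lieTwo, hξΩ, S.anchor_map_zero, hskew _ ξ, neg_zero, S.bracket_skew a ξ,
    S.bracket_skew b ξ, map_neg, LinearMap.neg_apply]
  linear_combination hskew a (S.bracket ξ b)

lemma lieTwo_reeb_left (hξΩ : ∀ a, Ω ξ a = 0) (hξξ : S.bracket ξ ξ = 0) (b : G) :
    S.lieTwo ξ Ω ξ b = 0 := by
  simp [lieTwo, hξΩ, hξξ]

lemma lieTwo_reeb_right (hskew : ∀ a b, Ω a b = -Ω b a) (hξΩ : ∀ a, Ω ξ a = 0)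
    (hξξ : S.bracket ξ ξ = 0) (a : G) : S.lieTwo ξ Ω a ξ = 0 := by
  simp [lieTwo, hskew _ ξ, hξΩ, hξξ]

lemma dTwo_sub_smul_sub_smul_sub_smul (hskew : ∀ a b, Ω a b = -Ω b a) (hξΩ : ∀ a, Ω ξ a = 0)
    (hξξ : S.bracket ξ ξ = 0) (a b c : G) (φ ψ χ : R) :
    S.dTwo Ω (a - φ • ξ) (b - ψ • ξ) (c - χ • ξ)
      = S.dTwo Ω a b c - φ * S.lieTwo ξ Ω b c + ψ * S.lieTwo ξ Ω a c
        - χ * S.lieTwo ξ Ω a b := by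
  simp only [dTwo_sub_smul_left, dTwo_sub_smul_mid hskew, dTwo_sub_smul_right hskew]
  simp only [dTwo_reeb_left hskew hξΩ, dTwo_reeb_mid hskew hξΩ, dTwo_reeb_right hskew hξΩ,
    lieTwo_reeb_left hξΩ hξξ, lieTwo_reeb_right hskew hξΩ hξξ]
  ring

end Forms

end SkewAlgebroid

/-- `flat` is `♭_{Ω,η}`; the nondegeneracy of `η ∧ Ωᵐ` is encoded by its being an equivalence,
and `sharp` is `♯_Π` for the fundamental bivector `Π(α,β) = Ω(♯_{Ω,η}α, ♯_{Ω,η}β)`. -/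
structure IsAlmostCosymplectic (Ω : G →ₗ[R] G →ₗ[R] R) (η : G →ₗ[R] R) (ξ : G)
    (flat : G ≃ₗ[R] (G →ₗ[R] R)) (sharp : (G →ₗ[R] R) → G) : Prop where
  skew : ∀ a b, Ω a b = -Ω b a
  reeb_apply : ∀ a, Ω ξ a = 0
  eta_reeb : η ξ = 1
  flat_apply : ∀ a b, flat a b = -Ω a b + η a * η b
  sharp_apply : ∀ α β, β (sharp α) = Ω (flat.symm α) (flat.symm β)

namespace IsAlmostCosymplectic

variable {Ω : G →ₗ[R] G →ₗ[R] R} {η : G →ₗ[R] R} {ξ : G} {flat : G ≃ₗ[R] (G →ₗ[R] R)}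
  {sharp : (G →ₗ[R] R) → G} (h : IsAlmostCosymplectic Ω η ξ flat sharp)
include h

lemma apply_reeb (a : G) : Ω a ξ = 0 := by
  rw [h.skew, h.reeb_apply, neg_zero]

lemma apply_sub_smul_reeb_left (a b : G) (φ : R) : Ω (a - φ • ξ) b = Ω a b := by
  simp [h.reeb_apply]

lemma apply_sub_smul_reeb_right (a b : G) (φ : R) : Ω a (b - φ • ξ) = Ω a b := by
  simp [h.apply_reeb]

lemma eta_sub_smul_reeb (x : G) : η (x - η x • ξ) = 0 := by
  simp [h.eta_reeb]

lemma flat_apply_reeb (a : G) : flat a ξ = η a := by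
  rw [h.flat_apply, h.apply_reeb, h.eta_reeb]
  ring

lemma flat_apply_sub_smul_reeb (u x : G) : flat u (x - η x • ξ) = Ω x u := by
  rw [map_sub, map_smul, h.flat_apply_reeb, h.flat_apply, h.skew u x, smul_eq_mul]
  ring

lemma eq_zero_of_forall_flat_apply {z : G} (hz : ∀ y, flat y z = 0) : z = 0 := by
  have hηz : η z = 0 := by simpa [h.flat_apply, h.reeb_apply, h.eta_reeb] using hz ξ
  have hflat : flat z = 0 := LinearMap.ext fun w => by
    simpa [h.flat_apply, hηz, h.skew z w] using hz w
  simpa using congrArg flat.symm hflat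

lemma sharp_flat (x : G) : sharp (flat x) = x - η x • ξ :=
  sub_eq_zero.mp <| h.eq_zero_of_forall_flat_apply fun y => by
    rw [map_sub, h.sharp_apply, h.flat_apply_sub_smul_reeb, flat.symm_apply_apply,
      flat.symm_apply_apply, sub_self]

lemma biv_flat (x y : G) : biv sharp (flat x) (flat y) = Ω x y := by
  rw [biv, h.sharp_apply, flat.symm_apply_apply, flat.symm_apply_apply]

lemma biv_apply_flat (α : G →ₗ[R] R) (x : G) : biv sharp α (flat x) = -α (x - η x • ξ) := by
  conv_rhs => rw [← flat.apply_symm_apply α, h.flat_apply_sub_smul_reeb]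
  rw [biv, h.sharp_apply, flat.symm_apply_apply, h.skew]

lemma wedgeVB_flat (a b c : G) :
    wedgeVB ξ sharp (flat a) (flat b) (flat c) = η a * Ω b c - η b * Ω a c + η c * Ω a b := by
  simp only [wedgeVB, h.flat_apply_reeb, h.biv_flat]

variable (S : SkewAlgebroid R G)

lemma lieDeriv_flat_apply (v a x : G) :
    S.lieDeriv v (flat a) x
      = -Ω (S.bracket v a) x - S.lieTwo v Ω a x + S.anchor v (η a) * η x
        + η a * S.lieDeriv v η x := by
  simp only [S.lieDeriv_apply, lieTwo, h.flat_apply, S.anchor_map_add, S.anchor_map_neg,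
    S.anchor_map_mul]
  ring

lemma lieBiv_flat (hξξ : S.bracket ξ ξ = 0) (a b : G) :
    S.lieBiv ξ sharp (flat a) (flat b)
      = (η a * S.lieDeriv ξ η b - η b * S.lieDeriv ξ η a) - S.lieTwo ξ Ω a b := by
  have hηξ : S.lieDeriv ξ η ξ = 0 := by
    simp [S.lieDeriv_apply, h.eta_reeb, hξξ]
  rw [lieBiv, h.biv_flat, h.biv_apply_flat, biv, h.sharp_flat]
  simp only [map_sub, map_smul, smul_eq_mul]
  simp only [h.lieDeriv_flat_apply S, h.apply_reeb, hηξ, lieTwo_reeb_right h.skew h.reeb_apply hξξ,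
    h.eta_reeb]
  simp only [lieTwo]
  rw [h.skew b a, S.anchor_map_neg]
  linear_combination -h.skew b (S.bracket ξ a)

lemma schouten_flat (a b c : G) :
    S.schouten sharp (flat a) (flat b) (flat c)
      = 2 * (S.dTwo Ω (a - η a • ξ) (b - η b • ξ) (c - η c • ξ)
        + (η a * S.dOne η (b - η b • ξ) (c - η c • ξ) - η b * S.dOne η (a - η a • ξ) (c - η c • ξ)
          + η c * S.dOne η (a - η a • ξ) (b - η b • ξ))) := by
  simp only [schouten, koszul, h.biv_flat, h.biv_apply_flat, h.sharp_flat, LinearMap.sub_apply,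
    S.lieDeriv_apply, S.dform_apply, h.flat_apply_sub_smul_reeb]
  simp only [dTwo, dOne, h.flat_apply, h.apply_sub_smul_reeb_left, h.apply_sub_smul_reeb_right,
    h.eta_sub_smul_reeb, S.anchor_map_zero]
  generalize a - η a • ξ = x, b - η b • ξ = y, c - η c • ξ = z
  simp only [S.bracket_skew z x, S.bracket_skew z y, S.bracket_skew y x, map_neg, h.skew c b,
    h.skew c a, h.skew b a, S.anchor_map_neg]
  linear_combination 2 * h.skew a (S.bracket y z) - 2 * h.skew b (S.bracket x z)
    + 2 * h.skew c (S.bracket x y)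

end IsAlmostCosymplectic

lemma half_smul_two_mul [Algebra ℝ R] (r : R) : (1 / 2 : ℝ) • (2 * r) = r := by
  rw [Algebra.smul_def, ← mul_assoc, ← map_ofNat (algebraMap ℝ R) 2, ← map_mul]
  norm_num

/-- identities for the fundamental pair `(Π,ξ)` of an almost
cosymplectic structure `(Ω,η)`, evaluated at `α = ♭_{Ω,η}a`, `β = ♭_{Ω,η}b`,
`γ = ♭_{Ω,η}c`:
(1) `((1/2)[Π,Π] − ξ∧Π)(α,β,γ) = (d_ρΩ + η∧(d_ρη − Ω − L_ξΩ))(a,b,c)`;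
(2) `L_ξΠ(α,β) = (η∧L_ξη − L_ξΩ)(a,b)`. -/
theorem cosymplectic_fundamental_identities [Algebra ℝ R]
    (S : SkewAlgebroid R G) (Ω : G →ₗ[R] G →ₗ[R] R)
    (hΩskew : ∀ a b : G, Ω a b = - Ω b a)
    (η : G →ₗ[R] R) (ξ : G)
    (hξΩ : ∀ a : G, Ω ξ a = 0) (hηξ : η ξ = 1)
    (e : G ≃ₗ[R] (G →ₗ[R] R))
    (he : ∀ a b : G, e a b = -(Ω a b) + η a * η b)
    (sP : (G →ₗ[R] R) → G)
    (hsP : ∀ α β : G →ₗ[R] R, β (sP α) = Ω (e.symm α) (e.symm β)) :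
    (∀ a b c : G,
        (1/2 : ℝ) • S.schouten sP (e a) (e b) (e c) - wedgeVB ξ sP (e a) (e b) (e c)
          = S.dTwo Ω a b c
            + (η a * (S.dOne η b c - Ω b c - S.lieTwo ξ Ω b c)
              - η b * (S.dOne η a c - Ω a c - S.lieTwo ξ Ω a c)
              + η c * (S.dOne η a b - Ω a b - S.lieTwo ξ Ω a b)))
    ∧ (∀ a b : G,
        S.lieBiv ξ sP (e a) (e b)
          = (η a * S.lieDeriv ξ η b - η b * S.lieDeriv ξ η a) - S.lieTwo ξ Ω a b) := by
  have h : IsAlmostCosymplectic Ω η ξ e sP := ⟨hΩskew, hξΩ, hηξ, he, hsP⟩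
  have hξξ : S.bracket ξ ξ = 0 := S.bracket_self ξ
  refine ⟨fun a b c => ?_, h.lieBiv_flat S hξξ⟩
  rw [h.schouten_flat S, h.wedgeVB_flat, dTwo_sub_smul_sub_smul_sub_smul hΩskew hξΩ hξξ,
    dOne_sub_smul_sub_smul hξξ, dOne_sub_smul_sub_smul hξξ, dOne_sub_smul_sub_smul hξξ,
    half_smul_two_mul]
  ring
end
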